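/- The subspace ISTA step x⁺ = x - αψ(x) satisfies m(x⁺) ≤ m(x) - (α/2)||ψ(x)||², where m is the ISTA model at x. -/

import Mathlib

/-!
Coordinatewise, `x - α ψ(x)` is either `x` itself or the soft-thresholding
`y = prox_{ατ|·|}(u)` of the gradient step `u = x - α g`. The optimality condition of
the prox is the subgradient inequality `ατ |y| + (u - y)(t - y) ≤ ατ |t|`; taken at
`t = x` it is exactly the per-coordinate form of the claimed decrease, because the
quadratic part of `m` changes by `-α ψ·g + (α/2) ψ·ψ` along the step.
-/

noncomputable def softThreshold (c u : ℝ) : ℝ := max (|u| - c) 0 * Real.sign u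

theorem softThreshold_variational_ineq {c : ℝ} (hc : 0 ≤ c) (u t : ℝ) :
    c * |softThreshold c u| + (u - softThreshold c u) * (t - softThreshold c u)
      ≤ c * |t| := by
  unfold softThreshold
  rcases le_or_gt |u| c with hu | hu
  · rw [max_eq_right (by linarith), zero_mul, abs_zero, mul_zero, zero_add, sub_zero,
      sub_zero]
    calc u * t ≤ |u| * |t| := abs_mul u t ▸ le_abs_self _
      _ ≤ c * |t| := by gcongr
  · rw [max_eq_left (by linarith)]
    rcases lt_abs.mp hu with hu | hu
    · rw [Real.sign_of_pos (by linarith), abs_of_pos (by linarith), mul_one,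
        abs_of_pos (by linarith)]
      nlinarith [le_abs_self t]
    · rw [Real.sign_of_neg (by linarith), abs_of_neg (a := u) (by linarith),
        show (-u - c) * -1 = u + c by ring, abs_of_neg (by linarith)]
      nlinarith [neg_abs_le t]

theorem softThreshold_step_decrease {α τ x g ψ : ℝ} (hα : 0 < α) (hτ : 0 ≤ τ)
    (hψ : α * ψ = x - softThreshold (α * τ) (x - α * g)) :
    α * (ψ * ψ) - α * (ψ * g) + τ * (|x - α * ψ| - |x|) ≤ 0 := by
  have key := softThreshold_variational_ineq (by positivity : 0 ≤ α * τ) (x - α * g) x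
  set y := softThreshold (α * τ) (x - α * g)
  rw [show x - α * ψ = y by linarith]
  refine nonpos_of_mul_nonpos_left ?_ hα
  -- times `α`, the left side is `ατ |y| + (u - y)(x - y) - ατ |x|` with `u = x - α g`
  linear_combination key + (x - y - α * g + α * ψ) * hψ

open Matrix in
theorem subspace_ista_model_decrease_general
    (n : ℕ)
    (τ α : ℝ) (hτ : 0 ≤ τ) (hα : 0 < α)
    (x : Fin n → ℝ)
    (f : (Fin n → ℝ) → ℝ)
    (g : Fin n → ℝ)
    (psi : Fin n → ℝ)
    (hpsi : ∀ i, psi i =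
      if x i = 0 then 0
      else 1 / α * (x i - max (|x i - α * g i| - α * τ) 0 * Real.sign (x i - α * g i)))
    (m : (Fin n → ℝ) → ℝ)
    (hm : ∀ y, m y = f x + (y - x) ⬝ᵥ g
        + 1 / (2 * α) * ((y - x) ⬝ᵥ (y - x)) + τ * ∑ i, |y i|) :
    m (x - α • psi) ≤ m x - α / 2 * (psi ⬝ᵥ psi) := by
  have coord (i : Fin n) :
      α * (psi i * psi i) - α * (psi i * g i) + τ * (|x i - α * psi i| - |x i|) ≤ 0 := by
    by_cases hx : x i = 0
    · simp [hpsi i, hx]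
    · refine softThreshold_step_decrease hα hτ ?_
      rw [hpsi i, if_neg hx, softThreshold]
      field_simp
  have hsum := Finset.sum_nonpos fun i (_ : i ∈ Finset.univ) => coord i
  simp only [Finset.sum_add_distrib, Finset.sum_sub_distrib, ← Finset.mul_sum] at hsum
  have quadratic : 1 / (2 * α) * (α * (α * (psi ⬝ᵥ psi))) = α / 2 * (psi ⬝ᵥ psi) := by
    field_simp
  rw [hm, hm, sub_sub_cancel_left, sub_self, neg_dotProduct, neg_dotProduct, dotProduct_neg,
    smul_dotProduct, smul_dotProduct, dotProduct_smul, zero_dotProduct, dotProduct_zero]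
  simp only [smul_eq_mul, quadratic, Pi.sub_apply, Pi.smul_apply, neg_neg]
  simp only [dotProduct] at hsum ⊢
  linarith

open Matrix in
theorem subspace_ista_model_decrease
    (n : ℕ) (A : Matrix (Fin n) (Fin n) ℝ) (b : Fin n → ℝ)
    (τ α : ℝ) (hτ : 0 ≤ τ) (hα : 0 < α)
    (x : Fin n → ℝ)
    (f : (Fin n → ℝ) → ℝ) (hf : ∀ y, f y = 1 / 2 * (y ⬝ᵥ A.mulVec y) - b ⬝ᵥ y)
    (g : Fin n → ℝ) (hg : g = A.mulVec x - b)
    (psi : Fin n → ℝ)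
    (hpsi : ∀ i, psi i =
      if x i = 0 then 0
      else 1 / α * (x i - max (|x i - α * g i| - α * τ) 0 * Real.sign (x i - α * g i)))
    (m : (Fin n → ℝ) → ℝ)
    (hm : ∀ y, m y = f x + (y - x) ⬝ᵥ g
        + 1 / (2 * α) * ((y - x) ⬝ᵥ (y - x)) + τ * ∑ i, |y i|) :
    m (x - α • psi) ≤ m x - α / 2 * (psi ⬝ᵥ psi) :=
  subspace_ista_model_decrease_general n τ α hτ hα x f g psi hpsi m hm
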